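/- Let A ∈ 𝔅(n), H = (Z/2)[x_1,...,x_n]/(x_j^2 = x_j α_j) with α_j = Σ_i A^i_j x_i, and let α ∈ H^1 be an eigen-element. Then the eigen-space E_A(α) = { x ∈ H^1 : x^2 = αx } is the Z/2-subspace of H^1 spanned by α together with the elements x_i for which α_i = α. -/

import Mathlib

open MvPolynomial

/-- Strictly upper triangular matrix (zero diagonal, zero below diagonal);
membership in `𝔅(n)`. -/
def IsUpperTri {n : ℕ} (A : Matrix (Fin n) (Fin n) (ZMod 2)) : Prop :=
  ∀ i j : Fin n, j ≤ i → A i j = 0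

/-- The defining ideal `(x_j^2 - x_j Σ_i A^i_j x_i)`. -/
noncomputable def bottIdeal {n : ℕ} (A : Matrix (Fin n) (Fin n) (ZMod 2)) :
    Ideal (MvPolynomial (Fin n) (ZMod 2)) :=
  Ideal.span (Set.range fun j : Fin n => X j ^ 2 - X j * ∑ i : Fin n, C (A i j) * X i)

/-- The Bott ring `H = (Z/2)[x_1,...,x_n]/(x_j^2 = x_j Σ_i A^i_j x_i)` presented by `A`. -/
abbrev BottRing {n : ℕ} (A : Matrix (Fin n) (Fin n) (ZMod 2)) : Type :=
  MvPolynomial (Fin n) (ZMod 2) ⧸ bottIdeal A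

/-- The canonical degree-one generators `x_j`. -/
noncomputable def bx {n : ℕ} (A : Matrix (Fin n) (Fin n) (ZMod 2)) (j : Fin n) : BottRing A :=
  Ideal.Quotient.mk (bottIdeal A) (X j)

/-- The degree-one part `H^1` of the Bott ring (the span of `x_1,...,x_n`). -/
noncomputable def deg1 {n : ℕ} (A : Matrix (Fin n) (Fin n) (ZMod 2)) :
    Submodule (ZMod 2) (BottRing A) :=
  Submodule.span (ZMod 2) (Set.range (bx A))

/-- The eigen-elements `α_j = Σ_i A^i_j x_i`. -/
noncomputable def alphaEl {n : ℕ} (A : Matrix (Fin n) (Fin n) (ZMod 2)) (j : Fin n) :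
    BottRing A :=
  ∑ i : Fin n, A i j • bx A i

open scoped Matrix

/-!
Write `x = ∑ c i • x_i` and `α = ∑ a i • x_i`. Rewriting `x_i ^ 2` as
`x_i α_i = ∑_{k < i} A k i x_k x_i`, the coefficient of `x_k x_i` (`k < i`) in the normal form of a
quadratic polynomial `p` is `coeff (x_k x_i) p + A k i * coeff (x_i ^ 2) p`; this functional
vanishes on the defining ideal because its generators are homogeneous of degree 2. Applied to
`x ^ 2 - α * x` it yields relations over `ZMod 2` which force an `ε` such that every `i` with
`c i ≠ ε * a i` has column `i` of `A` equal to `a`, i.e. `α_i = α`. Then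
`x = ε • α + ∑ (c i - ε * a i) • x_i` lies in the span. Conversely, the solutions of `x ^ 2 = α * x`
form a subspace containing `α` and every `x_i` with `α_i = α`.
-/

namespace MvPolynomial

theorem coeff_mul_of_isHomogeneous {σ R : Type*} [CommSemiring R] {g : MvPolynomial σ R}
    {d : ℕ} (hg : g.IsHomogeneous d) (q : MvPolynomial σ R) {m : σ →₀ ℕ}
    (hm : m.degree = d) : coeff m (q * g) = coeff 0 q * coeff m g := by
  classical
  rw [coeff_mul, Finset.sum_eq_single (0, m)]
  · rintro ⟨u, v⟩ huv hne
    rw [Finset.HasAntidiagonal.mem_antidiagonal] at huv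
    suffices v.degree ≠ d by rw [hg.coeff_eq_zero this, mul_zero]
    intro hv
    have hu : u.degree = 0 := by
      have := congrArg Finsupp.degree huv
      simp only [map_add] at this
      omega
    rw [Finsupp.degree_eq_zero_iff] at hu
    simp_all
  · simp

variable {σ R : Type*} [Fintype σ] [CommSemiring R]

noncomputable def linearForm : (σ → R) →ₗ[R] MvPolynomial σ R :=
  Fintype.linearCombination R X

theorem linearForm_apply (b : σ → R) : linearForm b = ∑ i, b i • X i :=
  Fintype.linearCombination_apply R X b

theorem linearForm_single [DecidableEq σ] (i : σ) :
    linearForm (Pi.single i 1) = (X i : MvPolynomial σ R) := by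
  simp [linearForm, Fintype.linearCombination_apply_single]

theorem isHomogeneous_linearForm (b : σ → R) : (linearForm b).IsHomogeneous 1 := by
  simp only [linearForm_apply, smul_eq_C_mul]
  exact IsHomogeneous.sum _ _ _ fun i _ => (isHomogeneous_X R i).C_mul _

theorem linearForm_mul_linearForm (b c : σ → R) :
    linearForm b * linearForm c =
      ∑ p, ∑ q, monomial (Finsupp.single p 1 + Finsupp.single q 1) (b p * c q) := by
  simp only [linearForm_apply, Finset.sum_mul_sum, smul_eq_C_mul, X, C_mul_monomial,
    monomial_mul, mul_one]

theorem coeff_linearForm_mul_linearForm_of_ne (b c : σ → R) {k i : σ} (hki : k ≠ i) :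
    coeff (Finsupp.single k 1 + Finsupp.single i 1) (linearForm b * linearForm c) =
      b k * c i + b i * c k := by
  classical
  simp only [linearForm_mul_linearForm, coeff_sum, coeff_monomial,
    Finsupp.single_add_single_eq_single_add_single one_ne_zero one_ne_zero]
  rw [Fintype.sum_eq_add k i hki]
  · simp [hki, hki.symm]
  · rintro p ⟨hpk, hpi⟩
    simp [hpk, hpi]

theorem coeff_linearForm_mul_linearForm_self (b c : σ → R) (i : σ) :
    coeff (Finsupp.single i 1 + Finsupp.single i 1) (linearForm b * linearForm c) =
      b i * c i := by
  classical
  simp [linearForm_mul_linearForm, coeff_sum, coeff_monomial,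
    Finsupp.single_add_single_eq_single_add_single, ite_and]

end MvPolynomial

section BottRing

variable {n : ℕ} (A : Matrix (Fin n) (Fin n) (ZMod 2))

theorem bottIdeal_generator_eq_linearForm_mul (j : Fin n) :
    (X j ^ 2 - X j * ∑ i : Fin n, C (A i j) * X i : MvPolynomial (Fin n) (ZMod 2)) =
      linearForm (Pi.single j 1) * linearForm (Pi.single j 1 - Aᵀ j) := by
  rw [map_sub, linearForm_single]
  simp only [linearForm_apply, smul_eq_C_mul, Matrix.transpose_apply]
  ring

noncomputable def bottCoeff (k i : Fin n) : MvPolynomial (Fin n) (ZMod 2) →ₗ[ZMod 2] ZMod 2 :=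
  lcoeff (ZMod 2) (Finsupp.single k 1 + Finsupp.single i 1) +
    A k i • lcoeff (ZMod 2) (Finsupp.single i 1 + Finsupp.single i 1)

theorem bottCoeff_linearForm_mul_linearForm (b c : Fin n → ZMod 2) {k i : Fin n} (hki : k ≠ i) :
    bottCoeff A k i (linearForm b * linearForm c) =
      b k * c i + b i * c k + A k i * (b i * c i) := by
  simp [bottCoeff, coeff_linearForm_mul_linearForm_of_ne _ _ hki,
    coeff_linearForm_mul_linearForm_self]

theorem bottCoeff_mul_of_isHomogeneous (k i : Fin n) (q : MvPolynomial (Fin n) (ZMod 2))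
    {g : MvPolynomial (Fin n) (ZMod 2)} (hg : g.IsHomogeneous 2) :
    bottCoeff A k i (q * g) = coeff 0 q * bottCoeff A k i g := by
  simp [bottCoeff, coeff_mul_of_isHomogeneous hg q, mul_add, mul_left_comm (coeff 0 q)]

theorem bottCoeff_generator_eq_zero (hA : IsUpperTri A) {k i : Fin n} (hki : k < i) (j : Fin n) :
    bottCoeff A k i (linearForm (Pi.single j 1) * linearForm (Pi.single j 1 - Aᵀ j)) = 0 := by
  rw [bottCoeff_linearForm_mul_linearForm A _ _ hki.ne]
  rcases eq_or_ne j k with rfl | hjk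
  · simp [hki.ne', hA i j hki.le]
  rcases eq_or_ne j i with rfl | hji
  · simp [hjk.symm, hA j j le_rfl, CharTwo.add_self_eq_zero]
  · simp [hjk.symm, hji.symm]

theorem bottCoeff_eq_zero_of_mem (hA : IsUpperTri A) {k i : Fin n} (hki : k < i)
    {p : MvPolynomial (Fin n) (ZMod 2)} (hp : p ∈ bottIdeal A) : bottCoeff A k i p = 0 := by
  obtain ⟨q, rfl⟩ := Ideal.mem_span_range_iff_exists_fun.mp hp
  refine (map_sum _ _ _).trans (Finset.sum_eq_zero fun j _ => ?_)
  rw [bottIdeal_generator_eq_linearForm_mul, bottCoeff_mul_of_isHomogeneous A k i _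
    ((isHomogeneous_linearForm _).mul (isHomogeneous_linearForm _)),
    bottCoeff_generator_eq_zero A hA hki, mul_zero]

theorem mk_linearForm (b : Fin n → ZMod 2) :
    Ideal.Quotient.mk (bottIdeal A) (linearForm b) = ∑ i, b i • bx A i := by
  rw [linearForm_apply, map_sum]
  refine Finset.sum_congr rfl fun i _ => ?_
  rw [← Ideal.Quotient.mkₐ_eq_mk (ZMod 2), map_smul]
  rfl

theorem alphaEl_eq_mk_linearForm (j : Fin n) :
    alphaEl A j = Ideal.Quotient.mk (bottIdeal A) (linearForm (Aᵀ j)) := by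
  rw [mk_linearForm]
  rfl

theorem bx_sq (j : Fin n) : bx A j ^ 2 = alphaEl A j * bx A j := by
  have hj : Ideal.Quotient.mk (bottIdeal A)
      (linearForm (Pi.single j 1) * linearForm (Pi.single j 1 - Aᵀ j)) = 0 := by
    rw [← bottIdeal_generator_eq_linearForm_mul, Ideal.Quotient.eq_zero_iff_mem]
    exact Ideal.subset_span ⟨j, rfl⟩
  rw [map_mul, map_sub, map_sub, linearForm_single, ← alphaEl_eq_mk_linearForm] at hj
  rw [sq, ← sub_eq_zero, ← sub_mul, mul_comm]
  exact hj

end BottRing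

/-- In a `ZMod 2`-algebra, `x ↦ x ^ 2 - α * x` is additive, so its zero set is a subspace. -/
def sqEqMulSubmodule {R : Type*} [CommRing R] [Algebra (ZMod 2) R] (α : R) :
    Submodule (ZMod 2) R where
  carrier := {x | x ^ 2 = α * x}
  add_mem' {x y} hx hy := by
    have hxy : (2 : R) * x * y = 0 := by rw [mul_assoc, two_mul, ZModModule.add_self]
    simp only [Set.mem_ofPred_eq] at hx hy ⊢
    rw [add_sq', hx, hy, hxy, add_zero, mul_add]
  zero_mem' := by simp
  smul_mem' r x hx := by
    simp only [Set.mem_ofPred_eq] at hx ⊢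
    rw [smul_pow, ZMod.pow_card, hx, mul_smul_comm]

section EigenRelations

variable {n : ℕ} {A : Matrix (Fin n) (Fin n) (ZMod 2)} {a c : Fin n → ZMod 2}

/-- The equation `x ^ 2 = α * x` for `x = ∑ c i • x_i`, `α = ∑ a i • x_i`, read off on the
coefficients of the monomials `x_k x_i`, `k < i`, of the normal form. -/
def EigenRelations (A : Matrix (Fin n) (Fin n) (ZMod 2)) (a c : Fin n → ZMod 2) : Prop :=
  ∀ k i, k < i → (c k - a k) * c i + (c i - a i) * c k + A k i * ((c i - a i) * c i) = 0

theorem EigenRelations.transpose_eq (hA : IsUpperTri A) (h : EigenRelations A a c) {i : Fin n}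
    (hci : c i = 1) (hai : a i = 0) : Aᵀ i = a := by
  funext k
  rw [Matrix.transpose_apply]
  rcases lt_trichotomy k i with hki | rfl | hik
  · have hrel := h k i hki
    rw [hci, hai] at hrel
    revert hrel
    generalize c k = x, a k = y, A k i = z
    revert x y z
    decide
  · rw [hA k k le_rfl, hai]
  · have hrel := h i k hik
    rw [hA k i hik.le]
    rw [hci, hai] at hrel
    revert hrel
    generalize c k = x, a k = y, A i k = z
    revert x y z
    decide

theorem EigenRelations.apply_eq_one (h : EigenRelations A a c) {i₀ i : Fin n}
    (hc₀ : c i₀ = 1) (ha₀ : a i₀ = 1) (ha : a i = 1) : c i = 1 := by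
  rcases lt_trichotomy i i₀ with hlt | rfl | hlt
  · have hrel := h i i₀ hlt
    rw [hc₀, ha₀, ha] at hrel
    revert hrel
    generalize c i = x, A i i₀ = z
    revert x z
    decide
  · exact hc₀
  · have hrel := h i₀ i hlt
    rw [hc₀, ha₀, ha] at hrel
    revert hrel
    generalize c i = x, A i₀ i = z
    revert x z
    decide

theorem EigenRelations.exists_transpose_eq (hA : IsUpperTri A) (h : EigenRelations A a c) :
    ∃ ε : ZMod 2, ∀ i, c i - ε * a i ≠ 0 → Aᵀ i = a := by
  by_cases hagree : ∃ i₀, c i₀ = 1 ∧ a i₀ = 1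
  · obtain ⟨i₀, hc₀, ha₀⟩ := hagree
    refine ⟨1, fun i hi => ?_⟩
    have hcases : ∀ x y : ZMod 2, x - 1 * y ≠ 0 → (y = 1 → x = 1) → x = 1 ∧ y = 0 := by
      decide
    obtain ⟨hci, hai⟩ := hcases _ _ hi (h.apply_eq_one hc₀ ha₀)
    exact h.transpose_eq hA hci hai
  · refine ⟨0, fun i hi => ?_⟩
    have hcases : ∀ x y : ZMod 2, x - 0 * y ≠ 0 → ¬(x = 1 ∧ y = 1) → x = 1 ∧ y = 0 := by
      decide
    obtain ⟨hci, hai⟩ := hcases _ _ hi (fun hi₁ => hagree ⟨i, hi₁⟩)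
    exact h.transpose_eq hA hci hai

end EigenRelations

section Eigenspace

variable {n : ℕ} (A : Matrix (Fin n) (Fin n) (ZMod 2))

theorem eigenRelations_of_sq_eq_mul (hA : IsUpperTri A) {a c : Fin n → ZMod 2}
    (h : (∑ i, c i • bx A i) ^ 2 = (∑ i, a i • bx A i) * ∑ i, c i • bx A i) :
    EigenRelations A a c := by
  intro k i hki
  have hmem : linearForm (c - a) * linearForm c ∈ bottIdeal A := by
    rw [← Ideal.Quotient.eq_zero_iff_mem, map_sub, sub_mul, map_sub, map_mul, map_mul,
      mk_linearForm, mk_linearForm, ← sq, h, sub_self]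
  simpa only [bottCoeff_linearForm_mul_linearForm A _ _ hki.ne, Pi.sub_apply] using
    bottCoeff_eq_zero_of_mem A hA hki hmem

theorem sum_smul_bx_mem_span_of_sq_eq_mul (hA : IsUpperTri A) {a c : Fin n → ZMod 2}
    (h : (∑ i, c i • bx A i) ^ 2 = (∑ i, a i • bx A i) * ∑ i, c i • bx A i) :
    ∑ i, c i • bx A i ∈ Submodule.span (ZMod 2) ({∑ i, a i • bx A i} ∪
      {y | ∃ i, alphaEl A i = ∑ i, a i • bx A i ∧ y = bx A i}) := by
  obtain ⟨ε, hε⟩ := (eigenRelations_of_sq_eq_mul A hA h).exists_transpose_eq hA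
  have hdecomp : ∑ i, c i • bx A i =
      ε • ∑ i, a i • bx A i + ∑ i, (c i - ε * a i) • bx A i := by
    rw [Finset.smul_sum, ← Finset.sum_add_distrib]
    refine Finset.sum_congr rfl fun i _ => ?_
    rw [smul_smul, ← add_smul, add_sub_cancel]
  rw [hdecomp]
  refine add_mem (Submodule.smul_mem _ _ (Submodule.subset_span (Or.inl rfl)))
    (Submodule.sum_mem _ fun i _ => ?_)
  by_cases hi : c i - ε * a i = 0
  · rw [hi, zero_smul]
    exact zero_mem _
  · refine Submodule.smul_mem _ _ (Submodule.subset_span (Or.inr ⟨i, ?_, rfl⟩))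
    rw [alphaEl_eq_mk_linearForm, hε i hi, mk_linearForm]

theorem span_le_deg1_inf_sqEqMulSubmodule {α : BottRing A} (hα : α ∈ deg1 A) :
    Submodule.span (ZMod 2) ({α} ∪ {y | ∃ i, alphaEl A i = α ∧ y = bx A i}) ≤
      deg1 A ⊓ sqEqMulSubmodule α := by
  rw [Submodule.span_le]
  rintro _ (rfl | ⟨i, hi, rfl⟩)
  · exact ⟨hα, sq _⟩
  · exact ⟨Submodule.subset_span ⟨i, rfl⟩, (bx_sq A i).trans (by rw [hi])⟩

end Eigenspace

theorem stmt6_general {n : ℕ} (A : Matrix (Fin n) (Fin n) (ZMod 2)) (hA : IsUpperTri A)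
    (α : BottRing A) (hα : α ∈ deg1 A) :
    {x : BottRing A | x ∈ deg1 A ∧ x ^ 2 = α * x} =
      (Submodule.span (ZMod 2)
        ({α} ∪ {y : BottRing A | ∃ i : Fin n, alphaEl A i = α ∧ y = bx A i}) :
        Submodule (ZMod 2) (BottRing A)) := by
  refine subset_antisymm ?_ (span_le_deg1_inf_sqEqMulSubmodule A hα)
  obtain ⟨a, rfl⟩ := (Submodule.mem_span_range_iff_exists_fun (ZMod 2)).mp hα
  rintro x ⟨hx, hsq⟩
  obtain ⟨c, rfl⟩ := (Submodule.mem_span_range_iff_exists_fun (ZMod 2)).mp hx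
  exact sum_smul_bx_mem_span_of_sq_eq_mul A hA hsq

/-- The eigen-space `E_A(α) = {x ∈ H^1 : x² = αx}` of an eigen-element `α` is the
`Z/2`-subspace of `H^1` spanned by `α` together with the `x_i` with `α_i = α`. -/
theorem stmt6 {n : ℕ} (A : Matrix (Fin n) (Fin n) (ZMod 2)) (hA : IsUpperTri A)
    (α : BottRing A) (hα : α ∈ deg1 A)
    (h : ∃ x ∈ deg1 A, x ^ 2 = α * x ∧ x ≠ 0 ∧ x ≠ α) :
    {x : BottRing A | x ∈ deg1 A ∧ x ^ 2 = α * x} =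
      (Submodule.span (ZMod 2)
        ({α} ∪ {y : BottRing A | ∃ i : Fin n, alphaEl A i = α ∧ y = bx A i}) :
        Submodule (ZMod 2) (BottRing A)) :=
  stmt6_general A hA α hα
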